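/- For a map with a cross cap in normal form, in polar coordinates u = r cos θ, v = r sin θ, the function r⁴(H² − K_ext) tends to (a₀₂ cos θ)²/(4A_θ⁶) as r → 0, which is positive whenever cos θ ≠ 0; consequently umbilical points (where H² = K_ext) do not accumulate at the cross cap along directions with cos θ ≠ 0. -/

import Mathlib

noncomputable section
open Real Filter

/-- Euclidean dot product on ℝ³ (as ℝ × ℝ × ℝ). -/
def dot3 (a b : ℝ × ℝ × ℝ) : ℝ := a.1 * b.1 + a.2.1 * b.2.1 + a.2.2 * b.2.2

/-- Cross product on ℝ³. -/
def cross3 (a b : ℝ × ℝ × ℝ) : ℝ × ℝ × ℝ :=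
  (a.2.1 * b.2.2 - a.2.2 * b.2.1, a.2.2 * b.1 - a.1 * b.2.2, a.1 * b.2.1 - a.2.1 * b.1)

/-- Determinant of three column vectors in ℝ³. -/
def det3 (a b c : ℝ × ℝ × ℝ) : ℝ := dot3 (cross3 a b) c

/-- Euclidean norm on ℝ³. -/
def norm3 (a : ℝ × ℝ × ℝ) : ℝ := Real.sqrt (dot3 a a)

/-- Partial derivative in the first variable. -/
def p1 {E : Type*} [NormedAddCommGroup E] [NormedSpace ℝ E] (f : ℝ → ℝ → E) (u v : ℝ) : E :=
  deriv (fun t => f t v) u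

/-- Partial derivative in the second variable. -/
def p2 {E : Type*} [NormedAddCommGroup E] [NormedSpace ℝ E] (f : ℝ → ℝ → E) (u v : ℝ) : E :=
  deriv (fun t => f u t) v

/-- First fundamental form coefficients. -/
def Efun (f : ℝ → ℝ → ℝ × ℝ × ℝ) (u v : ℝ) : ℝ := dot3 (p1 f u v) (p1 f u v)
def Ffun (f : ℝ → ℝ → ℝ × ℝ × ℝ) (u v : ℝ) : ℝ := dot3 (p1 f u v) (p2 f u v)
def Gfun (f : ℝ → ℝ → ℝ × ℝ × ℝ) (u v : ℝ) : ℝ := dot3 (p2 f u v) (p2 f u v)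

/-- Unit normal vector at a regular point. -/
def nuVec (f : ℝ → ℝ → ℝ × ℝ × ℝ) (u v : ℝ) : ℝ × ℝ × ℝ :=
  (norm3 (cross3 (p1 f u v) (p2 f u v)))⁻¹ • cross3 (p1 f u v) (p2 f u v)

/-- Second fundamental form coefficients. -/
def Lfun (f : ℝ → ℝ → ℝ × ℝ × ℝ) (u v : ℝ) : ℝ := dot3 (nuVec f u v) (p1 (p1 f) u v)
def Mfun (f : ℝ → ℝ → ℝ × ℝ × ℝ) (u v : ℝ) : ℝ := dot3 (nuVec f u v) (p1 (p2 f) u v)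
def Nfun (f : ℝ → ℝ → ℝ × ℝ × ℝ) (u v : ℝ) : ℝ := dot3 (nuVec f u v) (p2 (p2 f) u v)

/-- Mean curvature. -/
def Hfun (f : ℝ → ℝ → ℝ × ℝ × ℝ) (u v : ℝ) : ℝ :=
  (Efun f u v * Nfun f u v - 2 * Ffun f u v * Mfun f u v + Gfun f u v * Lfun f u v) /
    (2 * (Efun f u v * Gfun f u v - Ffun f u v ^ 2))

/-- Extrinsic (Gaussian) curvature. -/
def Kext (f : ℝ → ℝ → ℝ × ℝ × ℝ) (u v : ℝ) : ℝ :=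
  (Lfun f u v * Nfun f u v - Mfun f u v ^ 2) /
    (Efun f u v * Gfun f u v - Ffun f u v ^ 2)

open Topology

/-!
Writing the second fundamental form through the unnormalised normal `f_u × f_v`, whose squared
length is `W = EG - F²` (Lagrange's identity), gives `H² - K = (X² - 4WY) / (4W³)` with
`X = EN' - 2FM' + GL'`, `Y = L'N' - M'²` and `L' = det(f_u, f_v, f_uu)` etc. Along the ray
`(r cos θ, r sin θ)` of the cross cap, `E = 1 + O(r²)`, `F, G = O(r²)` with `G / r² → A_θ²`,
and `L', M', N' = O(r)` with `N' / r = a₀₂ cos θ`; so `r⁴(H² - K)` is a rational function of `r`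
that is regular at `0`, with value `(a₀₂ cos θ)² / (4 A_θ⁶)` there.
-/

def curvatureDiscriminant (E F G L M N : ℝ) : ℝ :=
  ((E * N - 2 * F * M + G * L) ^ 2 - 4 * (E * G - F ^ 2) * (L * N - M ^ 2)) /
    (4 * (E * G - F ^ 2) ^ 3)

lemma dot3_smul_left (t : ℝ) (a b : ℝ × ℝ × ℝ) : dot3 (t • a) b = t * dot3 a b := by
  simp only [dot3, Prod.smul_fst, Prod.smul_snd, smul_eq_mul]; ring

lemma dot3_self_nonneg (a : ℝ × ℝ × ℝ) : 0 ≤ dot3 a a :=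
  add_nonneg (add_nonneg (mul_self_nonneg _) (mul_self_nonneg _)) (mul_self_nonneg _)

lemma dot3_cross3_self (a b : ℝ × ℝ × ℝ) :
    dot3 (cross3 a b) (cross3 a b) = dot3 a a * dot3 b b - dot3 a b ^ 2 := by
  simp only [dot3, cross3]; ring

lemma norm3_cross3_sq (a b : ℝ × ℝ × ℝ) :
    norm3 (cross3 a b) ^ 2 = dot3 a a * dot3 b b - dot3 a b ^ 2 := by
  rw [norm3, Real.sq_sqrt (dot3_self_nonneg _), dot3_cross3_self]

lemma dot3_nuVec (f : ℝ → ℝ → ℝ × ℝ × ℝ) (u v : ℝ) (b : ℝ × ℝ × ℝ) :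
    dot3 (nuVec f u v) b =
      (norm3 (cross3 (p1 f u v) (p2 f u v)))⁻¹ * det3 (p1 f u v) (p2 f u v) b :=
  dot3_smul_left _ _ _

lemma Hfun_sq_sub_Kext (f : ℝ → ℝ → ℝ × ℝ × ℝ) (u v : ℝ) :
    Hfun f u v ^ 2 - Kext f u v =
      curvatureDiscriminant (Efun f u v) (Ffun f u v) (Gfun f u v)
        (det3 (p1 f u v) (p2 f u v) (p1 (p1 f) u v))
        (det3 (p1 f u v) (p2 f u v) (p1 (p2 f) u v))
        (det3 (p1 f u v) (p2 f u v) (p2 (p2 f) u v)) := by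
  have hw : norm3 (cross3 (p1 f u v) (p2 f u v)) ^ 2 =
      Efun f u v * Gfun f u v - Ffun f u v ^ 2 :=
    norm3_cross3_sq _ _
  rw [Hfun, Kext, Lfun, Mfun, Nfun, dot3_nuVec, dot3_nuVec, dot3_nuVec, curvatureDiscriminant]
  generalize Efun f u v * Gfun f u v - Ffun f u v ^ 2 = W at hw ⊢
  generalize norm3 (cross3 (p1 f u v) (p2 f u v)) = w at hw
  subst hw
  rcases eq_or_ne w 0 with rfl | hw
  · -- at a singular point both sides are the junk value `0` of a division by zero
    simp
  · field_simp
    ring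

lemma tendsto_pow_four_mul_curvatureDiscriminant (e φ g l m n : ℝ) (hg : g ≠ 0) :
    Tendsto (fun r => r ^ 4 * curvatureDiscriminant (1 + r ^ 2 * e) (r ^ 2 * φ) (r ^ 2 * g)
        (r * l) (r * m) (r * n)) (𝓝[≠] 0) (𝓝 (n ^ 2 / (4 * g ^ 3))) := by
  set Y : ℝ → ℝ := fun r => g + r ^ 2 * (e * g - φ ^ 2)
  set R : ℝ → ℝ := fun r =>
    ((n + r ^ 2 * (e * n - 2 * φ * m + g * l)) ^ 2 - 4 * r ^ 2 * Y r * (l * n - m ^ 2)) /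
      (4 * Y r ^ 3)
  have hR : ∀ r ≠ (0 : ℝ), R r = r ^ 4 * curvatureDiscriminant (1 + r ^ 2 * e) (r ^ 2 * φ)
      (r ^ 2 * g) (r * l) (r * m) (r * n) := by
    intro r hr
    have hW : (1 + r ^ 2 * e) * (r ^ 2 * g) - (r ^ 2 * φ) ^ 2 = r ^ 2 * Y r := by ring
    dsimp only [R]
    rw [curvatureDiscriminant, hW, ← mul_div_assoc,
      show 4 * (r ^ 2 * Y r) ^ 3 = r ^ 6 * (4 * Y r ^ 3) by ring,
      ← mul_div_mul_left (_ : ℝ) (4 * Y r ^ 3) (pow_ne_zero 6 hr)]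
    congr 1
    ring
  have hR0 : R 0 = n ^ 2 / (4 * g ^ 3) := by simp [R, Y]
  have hRcont : ContinuousAt R 0 :=
    ContinuousAt.div (by fun_prop) (by fun_prop) (by simp [Y, hg])
  rw [← hR0]
  exact (hRcont.tendsto.mono_left nhdsWithin_le_nhds).congr' (eventually_nhdsWithin_of_forall hR)

def crossCap (a20 a11 a02 : ℝ) : ℝ → ℝ → ℝ × ℝ × ℝ := fun u v =>
  (u, u * v, (a20 * u ^ 2 + 2 * a11 * u * v + a02 * v ^ 2) / 2)

section CrossCap

variable (a20 a11 a02 : ℝ)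

lemma p1_crossCap : p1 (crossCap a20 a11 a02) = fun u v => (1, v, a20 * u + a11 * v) := by
  funext u v
  refine HasDerivAt.deriv ((hasDerivAt_id' u).prodMk ((hasDerivAt_mul_const v).prodMk ?_))
  exact ((((hasDerivAt_pow 2 u).const_mul a20).add
    (((hasDerivAt_id' u).const_mul (2 * a11)).mul_const v)).add_const (a02 * v ^ 2)).div_const 2
    |>.congr_deriv (by ring)

lemma p2_crossCap : p2 (crossCap a20 a11 a02) = fun u v => (0, u, a11 * u + a02 * v) := by
  funext u v
  refine HasDerivAt.deriv ((hasDerivAt_const v u).prodMk ((hasDerivAt_const_mul u).prodMk ?_))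
  exact ((((hasDerivAt_id' v).const_mul (2 * a11 * u)).const_add (a20 * u ^ 2)).add
    ((hasDerivAt_pow 2 v).const_mul a02)).div_const 2 |>.congr_deriv (by ring)

lemma p1_p1_crossCap (u v : ℝ) : p1 (p1 (crossCap a20 a11 a02)) u v = (0, 0, a20) := by
  rw [p1, p1_crossCap]
  exact ((hasDerivAt_const u 1).prodMk ((hasDerivAt_const u v).prodMk
    (((hasDerivAt_id' u).const_mul a20).add_const (a11 * v)))).deriv.trans (by simp)

lemma p1_p2_crossCap (u v : ℝ) : p1 (p2 (crossCap a20 a11 a02)) u v = (0, 1, a11) := by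
  rw [p1, p2_crossCap]
  exact ((hasDerivAt_const u 0).prodMk ((hasDerivAt_id' u).prodMk
    (((hasDerivAt_id' u).const_mul a11).add_const (a02 * v)))).deriv.trans (by simp)

lemma p2_p2_crossCap (u v : ℝ) : p2 (p2 (crossCap a20 a11 a02)) u v = (0, 0, a02) := by
  rw [p2, p2_crossCap]
  exact ((hasDerivAt_const v 0).prodMk ((hasDerivAt_const v u).prodMk
    (((hasDerivAt_id' v).const_mul a02).const_add (a11 * u)))).deriv.trans (by simp)

lemma crossCap_Hfun_sq_sub_Kext_ray (r c s : ℝ) :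
    Hfun (crossCap a20 a11 a02) (r * c) (r * s) ^ 2 - Kext (crossCap a20 a11 a02) (r * c) (r * s) =
      curvatureDiscriminant (1 + r ^ 2 * (s ^ 2 + (a20 * c + a11 * s) ^ 2))
        (r ^ 2 * (c * s + (a20 * c + a11 * s) * (a11 * c + a02 * s)))
        (r ^ 2 * (c ^ 2 + (a11 * c + a02 * s) ^ 2))
        (r * (a20 * c)) (r * -(a02 * s)) (r * (a02 * c)) := by
  rw [Hfun_sq_sub_Kext, p1_p1_crossCap, p1_p2_crossCap, p2_p2_crossCap]
  simp only [Efun, Ffun, Gfun, det3, dot3, cross3, p1_crossCap, p2_crossCap]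
  congr 1 <;> ring

end CrossCap

/-- along each direction with `cos θ ≠ 0`, the function
`r⁴(H² − K_ext)` tends to `(a₀₂cos θ)²/(4A_θ⁶) > 0` as `r → 0`; hence umbilics
(`H² = K_ext`) do not accumulate at the cross cap along such directions. -/
theorem stmt_16 (a20 a11 a02 : ℝ) (ha02 : 0 < a02) (θ : ℝ) (hθ : Real.cos θ ≠ 0) :
    let f : ℝ → ℝ → ℝ × ℝ × ℝ := fun u v =>
      (u, u * v, (a20 * u ^ 2 + 2 * a11 * u * v + a02 * v ^ 2) / 2)
    let A : ℝ := Real.sqrt (Real.cos θ ^ 2 + (a11 * Real.cos θ + a02 * Real.sin θ) ^ 2)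
    Tendsto
        (fun r : ℝ => r ^ 4 *
          ((Hfun f (r * Real.cos θ) (r * Real.sin θ)) ^ 2 -
            Kext f (r * Real.cos θ) (r * Real.sin θ)))
        (nhdsWithin 0 {0}ᶜ)
        (nhds ((a02 * Real.cos θ) ^ 2 / (4 * A ^ 6))) ∧
      0 < (a02 * Real.cos θ) ^ 2 / (4 * A ^ 6) ∧
      ∀ᶠ r in nhdsWithin (0:ℝ) {0}ᶜ,
        (Hfun f (r * Real.cos θ) (r * Real.sin θ)) ^ 2 ≠
          Kext f (r * Real.cos θ) (r * Real.sin θ) := by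
  intro f A
  have hf : f = crossCap a20 a11 a02 := rfl
  set c := Real.cos θ
  set s := Real.sin θ
  have hA2 : 0 < c ^ 2 + (a11 * c + a02 * s) ^ 2 := by positivity
  have hA6 : A ^ 6 = (c ^ 2 + (a11 * c + a02 * s) ^ 2) ^ 3 := by
    rw [show A ^ 6 = (A ^ 2) ^ 3 by ring, Real.sq_sqrt hA2.le]
  have hlim : Tendsto (fun r => r ^ 4 * (Hfun f (r * c) (r * s) ^ 2 - Kext f (r * c) (r * s)))
      (𝓝[≠] 0) (𝓝 ((a02 * c) ^ 2 / (4 * A ^ 6))) := by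
    simp only [hf, crossCap_Hfun_sq_sub_Kext_ray, hA6]
    exact tendsto_pow_four_mul_curvatureDiscriminant _ _ _ _ _ _ hA2.ne'
  have hpos : 0 < (a02 * c) ^ 2 / (4 * A ^ 6) := by
    have hn : a02 * c ≠ 0 := mul_ne_zero ha02.ne' hθ
    rw [hA6]
    positivity
  refine ⟨hlim, hpos, ?_⟩
  filter_upwards [hlim.eventually (eventually_gt_nhds hpos)] with r hr hHK
  simp [hHK] at hr
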